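/- arXiv:1909.00101 — 4 statements merged into one kernel-verified Lean document; each statement's English description precedes it below -/
import Mathlib

section
/- Let A ∈ M₂(ℂ) be Hermitian and B ∈ M₂(ℂ) be Hermitian positive definite with B₁₁ = B₂₂ = 1. Then |B₁₂| < 1, and, with t := √(1 − |B₁₂|²), there exist angles φ, ψ ∈ [0, π/2) and α, β ∈ ℝ such that the matrix Z := (1/t)·[[cos φ, e^{iα} sin φ], [−e^{−iβ} sin ψ, cos ψ]] satisfies Zᴴ B Z = I₂ and Zᴴ A Z is a diagonal matrix. -/
/-!
Scaling an orthonormal eigenbasis of `B` gives a congruence taking `B` to the identity, and a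
unitary then diagonalizes the transformed `A`. Permuting the columns (some term of the Leibniz
expansion of the determinant is nonzero) and multiplying them by unimodular scalars makes the
diagonal of the resulting `Z` positive. From `Zᴴ B Z = I₂` we get `Z Zᴴ = B⁻¹`, whose diagonal
entries are `1 / t²`, so each row of `t Z` is a unit vector of `ℂ²` with a positive diagonal
entry, i.e. of the form `(cos φ, e^{iα} sin φ)` resp. `(-e^{-iβ} sin ψ, cos ψ)` with
`φ, ψ ∈ [0, π/2)`.
-/

open scoped ComplexOrder
open Matrix

lemma RCLike.star_norm_div_mul_norm_div {𝕜 : Type*} [RCLike 𝕜] {z : 𝕜} (hz : z ≠ 0) :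
    star ((‖z‖ : 𝕜) / z) * ((‖z‖ : 𝕜) / z) = 1 := by
  rw [star_div₀, RCLike.star_def, RCLike.conj_ofReal, div_mul_div_comm, ← pow_two,
    ← RCLike.conj_mul, div_self]
  exact mul_ne_zero (star_ne_zero.mpr hz) hz

open Complex in
lemma Complex.exists_cos_eq_and_exp_mul_sin_eq {x : ℝ} {z : ℂ} (hx : 0 < x)
    (h : x ^ 2 + ‖z‖ ^ 2 = 1) :
    ∃ φ α : ℝ, 0 ≤ φ ∧ φ < Real.pi / 2 ∧ Real.cos φ = x ∧ exp (I * α) * Real.sin φ = z := by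
  have hx1 : x ≤ 1 := by nlinarith [norm_nonneg z]
  refine ⟨Real.arccos x, arg z, Real.arccos_nonneg x, Real.arccos_lt_pi_div_two.mpr hx,
    Real.cos_arccos (by linarith) hx1, ?_⟩
  rw [Real.sin_arccos, show 1 - x ^ 2 = ‖z‖ ^ 2 by linarith, Real.sqrt_sq (norm_nonneg z),
    mul_comm, mul_comm I]
  exact norm_mul_exp_arg_mul_I z

namespace Matrix

lemma exists_perm_apply_ne_zero_of_det_ne_zero {n R : Type*} [Fintype n] [DecidableEq n]
    [CommRing R] {M : Matrix n n R} (hM : M.det ≠ 0) :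
    ∃ σ : Equiv.Perm n, ∀ i, M i (σ i) ≠ 0 := by
  rw [det_apply] at hM
  obtain ⟨σ, -, hσ⟩ := Finset.exists_ne_zero_of_sum_ne_zero hM
  have hprod : ∏ i, M (σ i) i ≠ 0 := fun h ↦ hσ (by rw [h, smul_zero])
  refine ⟨σ⁻¹, fun i h ↦ hprod (Finset.prod_eq_zero (Finset.mem_univ (σ⁻¹ i)) ?_)⟩
  simpa using h

section General

variable {n 𝕜 : Type*} [Fintype n] [RCLike 𝕜]

lemma conjTranspose_mul_mul_mul_mul (V W M : Matrix n n 𝕜) :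
    (V * W)ᴴ * M * (V * W) = Wᴴ * (Vᴴ * M * V) * W := by
  simp only [conjTranspose_mul, Matrix.mul_assoc]

lemma mul_conjTranspose_apply_self (V : Matrix n n 𝕜) (i : n) :
    (V * Vᴴ) i i = ∑ j, ((‖V i j‖ ^ 2 : ℝ) : 𝕜) := by
  simp [mul_apply, RCLike.mul_conj]

variable [DecidableEq n]

def IsJointDiagonalizer (A B V : Matrix n n 𝕜) : Prop :=
  Vᴴ * B * V = 1 ∧ (Vᴴ * A * V).IsDiag

lemma IsHermitian.conjTranspose_eigenvectorUnitary_mul_mul {A : Matrix n n 𝕜}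
    (hA : A.IsHermitian) :
    (hA.eigenvectorUnitary : Matrix n n 𝕜)ᴴ * A * (hA.eigenvectorUnitary : Matrix n n 𝕜) =
      diagonal (RCLike.ofReal ∘ hA.eigenvalues) := by
  simpa [Unitary.conjStarAlgAut_star_apply, star_eq_conjTranspose] using
    hA.conjStarAlgAut_star_eigenvectorUnitary

lemma PosDef.exists_conjTranspose_mul_mul_eq_one {B : Matrix n n 𝕜} (hB : B.PosDef) :
    ∃ C : Matrix n n 𝕜, Cᴴ * B * C = 1 := by
  set μ := hB.isHermitian.eigenvalues
  refine ⟨(hB.isHermitian.eigenvectorUnitary : Matrix n n 𝕜) *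
    diagonal fun i ↦ (((√(μ i))⁻¹ : ℝ) : 𝕜), ?_⟩
  rw [conjTranspose_mul_mul_mul_mul, hB.isHermitian.conjTranspose_eigenvectorUnitary_mul_mul,
    diagonal_conjTranspose, diagonal_mul_diagonal, diagonal_mul_diagonal, ← diagonal_one]
  congr 1
  ext i
  have h : (√(μ i))⁻¹ * μ i * (√(μ i))⁻¹ = 1 := by
    rw [mul_right_comm, ← mul_inv, Real.mul_self_sqrt (hB.eigenvalues_pos i).le,
      inv_mul_cancel₀ (hB.eigenvalues_pos i).ne']
  simp only [Pi.star_apply, RCLike.star_def, RCLike.conj_ofReal, Function.comp_apply]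
  rw [← RCLike.ofReal_mul, ← RCLike.ofReal_mul, h, RCLike.ofReal_one]

lemma exists_isJointDiagonalizer {A B : Matrix n n 𝕜} (hA : A.IsHermitian) (hB : B.PosDef) :
    ∃ V : Matrix n n 𝕜, IsJointDiagonalizer A B V := by
  obtain ⟨C, hC⟩ := hB.exists_conjTranspose_mul_mul_eq_one
  have hCAC : (Cᴴ * A * C).IsHermitian := isHermitian_conjTranspose_mul_mul C hA
  refine ⟨C * (hCAC.eigenvectorUnitary : Matrix n n 𝕜), ?_, ?_⟩
  · rw [conjTranspose_mul_mul_mul_mul, hC, Matrix.mul_one]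
    exact Unitary.coe_star_mul_self hCAC.eigenvectorUnitary
  · rw [conjTranspose_mul_mul_mul_mul, hCAC.conjTranspose_eigenvectorUnitary_mul_mul]
    exact isDiag_diagonal _

namespace IsJointDiagonalizer

variable {A B V : Matrix n n 𝕜}

lemma submatrix_id (hV : IsJointDiagonalizer A B V) (σ : Equiv.Perm n) :
    IsJointDiagonalizer A B (V.submatrix id σ) := by
  have hconj (M : Matrix n n 𝕜) :
      (V.submatrix id σ)ᴴ * M * V.submatrix id σ = (Vᴴ * M * V).submatrix σ σ := by
    ext i j
    simp [Matrix.mul_apply, conjTranspose_apply]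
  refine ⟨?_, ?_⟩
  · rw [hconj, hV.1, submatrix_one_equiv]
  · rw [hconj]
    exact hV.2.submatrix σ.injective

lemma mul_diagonal (hV : IsJointDiagonalizer A B V) {u : n → 𝕜}
    (hu : ∀ i, star (u i) * u i = 1) :
    IsJointDiagonalizer A B (V * diagonal u) := by
  refine ⟨?_, ?_⟩
  · rw [conjTranspose_mul_mul_mul_mul, hV.1, Matrix.mul_one, diagonal_conjTranspose,
      diagonal_mul_diagonal, ← diagonal_one]
    exact congrArg diagonal (funext hu)
  · rw [conjTranspose_mul_mul_mul_mul, diagonal_conjTranspose]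
    intro i j hij
    simp [diagonal_mul, hV.2 hij]

lemma det_ne_zero (hV : IsJointDiagonalizer A B V) : V.det ≠ 0 := by
  intro h
  simpa [h] using congrArg det hV.1

lemma mul_mul_conjTranspose (hV : IsJointDiagonalizer A B V) : B * (V * Vᴴ) = 1 := by
  rw [← Matrix.mul_assoc]
  exact mul_eq_one_comm.mp (by rw [← Matrix.mul_assoc, hV.1])

lemma mul_conjTranspose_eq_inv (hV : IsJointDiagonalizer A B V) : V * Vᴴ = B⁻¹ :=
  (inv_eq_right_inv hV.mul_mul_conjTranspose).symm

end IsJointDiagonalizer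

lemma exists_isJointDiagonalizer_diag_ne_zero {A B : Matrix n n 𝕜} (hA : A.IsHermitian)
    (hB : B.PosDef) : ∃ V : Matrix n n 𝕜, IsJointDiagonalizer A B V ∧ ∀ i, V i i ≠ 0 := by
  obtain ⟨W, hW⟩ := exists_isJointDiagonalizer hA hB
  obtain ⟨σ, hσ⟩ := exists_perm_apply_ne_zero_of_det_ne_zero hW.det_ne_zero
  exact ⟨W.submatrix id σ, hW.submatrix_id σ, hσ⟩

lemma exists_isJointDiagonalizer_diag_pos {A B : Matrix n n 𝕜} (hA : A.IsHermitian)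
    (hB : B.PosDef) : ∃ V : Matrix n n 𝕜, IsJointDiagonalizer A B V ∧ ∀ i, 0 < V i i := by
  obtain ⟨V, hV, hVdiag⟩ := exists_isJointDiagonalizer_diag_ne_zero hA hB
  refine ⟨V * diagonal fun i ↦ (‖V i i‖ : 𝕜) / V i i,
    hV.mul_diagonal fun i ↦ RCLike.star_norm_div_mul_norm_div (hVdiag i), fun i ↦ ?_⟩
  rw [Matrix.mul_diagonal, mul_div_cancel₀ _ (hVdiag i)]
  exact RCLike.ofReal_pos.mpr (norm_pos_iff.mpr (hVdiag i))

end General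

section FinTwo

variable {𝕜 : Type*} [RCLike 𝕜]

lemma IsHermitian.det_fin_two_of_diag_eq_one {B : Matrix (Fin 2) (Fin 2) 𝕜}
    (hB : B.IsHermitian) (h00 : B 0 0 = 1) (h11 : B 1 1 = 1) :
    B.det = ((1 - ‖B 0 1‖ ^ 2 : ℝ) : 𝕜) := by
  rw [det_fin_two, h00, h11, ← hB.apply 1 0, RCLike.star_def, RCLike.mul_conj]
  push_cast
  ring

lemma inv_apply_self_fin_two {K : Type*} [Field K] {B : Matrix (Fin 2) (Fin 2) K}
    (h00 : B 0 0 = 1) (h11 : B 1 1 = 1) (i : Fin 2) : B⁻¹ i i = B.det⁻¹ := by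
  rw [inv_def, Ring.inverse_eq_inv', adjugate_fin_two]
  fin_cases i <;> simp [h00, h11]

lemma IsJointDiagonalizer.one_sub_norm_sq_mul_row_norm_sq {A B V : Matrix (Fin 2) (Fin 2) 𝕜}
    (hV : IsJointDiagonalizer A B V) (hB : B.IsHermitian) (h00 : B 0 0 = 1) (h11 : B 1 1 = 1)
    (i : Fin 2) : (1 - ‖B 0 1‖ ^ 2) * (‖V i 0‖ ^ 2 + ‖V i 1‖ ^ 2) = 1 := by
  have hrow := congrFun (congrFun hV.mul_conjTranspose_eq_inv i) i
  rw [mul_conjTranspose_apply_self, inv_apply_self_fin_two h00 h11, Fin.sum_univ_two] at hrow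
  have h := mul_inv_cancel₀ (isUnit_det_of_right_inverse hV.mul_mul_conjTranspose).ne_zero
  rw [← hrow, hB.det_fin_two_of_diag_eq_one h00 h11] at h
  exact_mod_cast h

end FinTwo

end Matrix

theorem stmt_0 (A B : Matrix (Fin 2) (Fin 2) ℂ)
    (hA : A.IsHermitian) (hB : B.PosDef)
    (hB11 : B 0 0 = 1) (hB22 : B 1 1 = 1) :
    ‖B 0 1‖ < 1 ∧
    ∃ φ ψ α β : ℝ,
      0 ≤ φ ∧ φ < Real.pi / 2 ∧ 0 ≤ ψ ∧ ψ < Real.pi / 2 ∧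
      (fun (Z : Matrix (Fin 2) (Fin 2) ℂ) =>
          Zᴴ * B * Z = 1 ∧ (Zᴴ * A * Z).IsDiag)
        (((1 / Real.sqrt (1 - ‖B 0 1‖ ^ 2) : ℝ) : ℂ) •
          !![(Real.cos φ : ℂ), Complex.exp (Complex.I * (α : ℂ)) * (Real.sin φ : ℂ);
             -(Complex.exp (-(Complex.I * (β : ℂ))) * (Real.sin ψ : ℂ)), (Real.cos ψ : ℂ)]) := by
  have hpos : 0 < 1 - ‖B 0 1‖ ^ 2 := by
    have h := hB.det_pos
    rwa [hB.isHermitian.det_fin_two_of_diag_eq_one hB11 hB22, RCLike.ofReal_pos] at h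
  set t := √(1 - ‖B 0 1‖ ^ 2)
  have ht : 0 < t := Real.sqrt_pos.mpr hpos
  obtain ⟨V, hV, hVpos⟩ := exists_isJointDiagonalizer_diag_pos hA hB
  have hrow (i : Fin 2) : ‖(t : ℂ) * V i 0‖ ^ 2 + ‖(t : ℂ) * V i 1‖ ^ 2 = 1 := by
    rw [norm_mul, norm_mul, Complex.norm_real, Real.norm_of_nonneg ht.le, mul_pow, mul_pow,
      ← mul_add, Real.sq_sqrt hpos.le]
    exact hV.one_sub_norm_sq_mul_row_norm_sq hB.isHermitian hB11 hB22 i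
  obtain ⟨x, hx, hxV⟩ := RCLike.pos_iff_exists_ofReal.mp (hVpos 0)
  obtain ⟨y, hy, hyV⟩ := RCLike.pos_iff_exists_ofReal.mp (hVpos 1)
  obtain ⟨φ, α, hφ0, hφ, hcosφ, hsinφ⟩ :=
    Complex.exists_cos_eq_and_exp_mul_sin_eq (z := t * V 0 1) (mul_pos ht hx) (by
      simpa [← hxV, abs_of_pos ht, abs_of_pos hx] using hrow 0)
  obtain ⟨ψ, β, hψ0, hψ, hcosψ, hsinψ⟩ :=
    Complex.exists_cos_eq_and_exp_mul_sin_eq (z := -(t * V 1 0)) (mul_pos ht hy) (by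
      simpa [← hyV, abs_of_pos ht, abs_of_pos hy, add_comm] using hrow 1)
  refine ⟨(pow_lt_one_iff_of_nonneg (norm_nonneg _) two_ne_zero).mp (by linarith),
    φ, ψ, α, -β, hφ0, hφ, hψ0, hψ, ?_⟩
  change IsJointDiagonalizer A B _
  convert hV using 1
  ext i j
  fin_cases i <;> fin_cases j <;>
    simp [-Complex.ofReal_sin, hcosφ, hsinφ, hcosψ, hsinψ, ← hxV, ← hyV, ht.ne']
end

section
/- Let A = [[a₁₁, a₁₂], [a₁₂, a₂₂]] ∈ M₂(ℝ) be symmetric and B = [[1, x], [x, 1]] ∈ M₂(ℝ) with |x| < 1, and set t := √(1 − x²). Assume d := 2·a₁₂ − (a₁₁ + a₂₂)·x ≠ 0, and put c₂ := t·(a₂₂ − a₁₁)/d. Define tϑ := σ/(|c₂| + √(1 + c₂²)) where σ := 1 if c₂ ≥ 0 and σ := −1 if c₂ < 0; cϑ := 1/√(1 + tϑ²); sϑ := tϑ·cϑ; ξ := x/(√(1 + x) + √(1 − x)); η := x/((1 + √(1 + x))·(1 + √(1 − x))); cφ := cϑ + ξ·(sϑ − η·cϑ); cψ := cϑ − ξ·(sϑ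 + η·cϑ); sφ := sϑ − ξ·(cϑ + η·sϑ); sψ := sϑ + ξ·(cϑ − η·sϑ). Then the matrix Z := (1/t)·[[cφ, sφ], [−sψ, cψ]] satisfies Zᵀ B Z = I₂ and Zᵀ A Z is a diagonal matrix. -/
/-!
Put `p = √(1 + x)`, `q = √(1 - x)`. Then `α := 1 - ξη = (p + q)/2` and `β := ξ = (p - q)/2`
satisfy `α² + β² = 1`, `2αβ = x` and `α² - β² = pq = t`, so `W = !![α, -β; -β, α]` satisfies
`WᵀBW = t² • 1`, and `Z = t⁻¹ • W R` with `R` the rotation by `ϑ`. Hence `ZᵀBZ = RᵀR = 1`, while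
`ZᵀAZ = t⁻² • Rᵀ(WᵀAW)R`. The symmetric matrix `WᵀAW` has off-diagonal entry `d/2` and diagonal
difference `t(a₂₂ - a₁₁)`, so `R` diagonalizes it iff `cot 2ϑ = c₂`, i.e. iff `tan ϑ` solves
`τ² + 2c₂τ = 1`; `tϑ` is the root of smaller modulus of that quadratic.
-/

open Matrix

variable {K : Type*} [CommRing K]

lemma Matrix.IsSymm.transpose_mul_mul {n : Type*} [Fintype n] {C : Matrix n n K} (hC : C.IsSymm)
    (M : Matrix n n K) : (Mᵀ * C * M).IsSymm := by
  simp [IsSymm, transpose_mul, hC.eq, Matrix.mul_assoc]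

lemma transpose_rotation_mul_rotation {c s : K} (h : c ^ 2 + s ^ 2 = 1) :
    (!![c, s; -s, c])ᵀ * !![c, s; -s, c] = 1 := by
  ext i j
  fin_cases i <;> fin_cases j <;> simp [Matrix.mul_apply, Fin.sum_univ_two, mul_comm] <;>
    linear_combination h

lemma isDiag_rotation_conj {c s : K} {C : Matrix (Fin 2) (Fin 2) K} (hC : C.IsSymm)
    (h : (c ^ 2 - s ^ 2) * C 0 1 = c * s * (C 1 1 - C 0 0)) :
    ((!![c, s; -s, c])ᵀ * C * !![c, s; -s, c]).IsDiag := by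
  have h10 : C 1 0 = C 0 1 := hC.apply 0 1
  intro i j hij
  fin_cases i <;> fin_cases j <;> simp_all [Matrix.mul_apply, Fin.sum_univ_two] <;>
    linear_combination h

lemma transpose_mul_unitDiag_mul_eq_smul_one {α β x : K} (h1 : α ^ 2 + β ^ 2 = 1)
    (hx : 2 * α * β = x) :
    (!![α, -β; -β, α])ᵀ * !![1, x; x, 1] * !![α, -β; -β, α] = (1 - x ^ 2) • 1 := by
  subst hx
  ext i j
  fin_cases i <;> fin_cases j <;> simp [Matrix.mul_apply, Fin.sum_univ_two]
  · linear_combination h1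
  · linear_combination 2 * α * β * h1
  · linear_combination 2 * α * β * h1
  · linear_combination h1

lemma transpose_mul_mul_apply_zero_one (α β a11 a12 a22 : K) :
    ((!![α, -β; -β, α])ᵀ * !![a11, a12; a12, a22] * !![α, -β; -β, α]) 0 1
      = (α ^ 2 + β ^ 2) * a12 - α * β * (a11 + a22) := by
  simp [Matrix.mul_apply, Fin.sum_univ_two]; ring

lemma transpose_mul_mul_apply_sub (α β a11 a12 a22 : K) :
    ((!![α, -β; -β, α])ᵀ * !![a11, a12; a12, a22] * !![α, -β; -β, α]) 1 1
      - ((!![α, -β; -β, α])ᵀ * !![a11, a12; a12, a22] * !![α, -β; -β, α]) 0 0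
      = (α ^ 2 - β ^ 2) * (a22 - a11) := by
  simp [Matrix.mul_apply, Fin.sum_univ_two]; ring

lemma perturbed_rotation_eq_mul (c s ξ η : K) :
    !![c + ξ * (s - η * c), s - ξ * (c + η * s); -(s + ξ * (c - η * s)), c - ξ * (s + η * c)]
      = !![1 - ξ * η, -ξ; -ξ, 1 - ξ * η] * !![c, s; -s, c] := by
  ext i j
  fin_cases i <;> fin_cases j <;> simp [Matrix.mul_apply, Fin.sum_univ_two] <;> ring

lemma sq_add_two_mul_mul_eq_one {c σ τ : ℝ} (hσ : σ = if 0 ≤ c then 1 else -1)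
    (hτ : τ = σ / (|c| + √(1 + c ^ 2))) : τ ^ 2 + 2 * c * τ = 1 := by
  have hr : √(1 + c ^ 2) ^ 2 = 1 + c ^ 2 := Real.sq_sqrt (by positivity)
  have hpos : 0 < |c| + √(1 + c ^ 2) := by positivity
  have hσc : σ * c = |c| := by
    rcases le_or_gt 0 c with hc | hc
    · simp [hσ, hc, abs_of_nonneg hc]
    · simp [hσ, not_le.mpr hc, abs_of_neg hc]
  have hσ2 : σ ^ 2 = 1 := by rw [hσ]; split <;> norm_num
  have hτ' : τ = σ * (√(1 + c ^ 2) - |c|) := by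
    rw [hτ, div_eq_iff hpos.ne']
    linear_combination σ * (sq_abs c - hr)
  rw [hτ']
  linear_combination
    (√(1 + c ^ 2) - |c|) ^ 2 * hσ2 + 2 * (√(1 + c ^ 2) - |c|) * hσc + hr - sq_abs c

lemma cos_sin_of_tan_root {κ τ c s : ℝ} (hτ : τ ^ 2 + 2 * κ * τ = 1)
    (hc : c = 1 / √(1 + τ ^ 2)) (hs : s = τ * c) :
    c ^ 2 + s ^ 2 = 1 ∧ c ^ 2 - s ^ 2 = 2 * κ * (c * s) := by
  have hr : √(1 + τ ^ 2) ^ 2 = 1 + τ ^ 2 := Real.sq_sqrt (by positivity)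
  subst hs
  refine ⟨?_, by linear_combination (-c ^ 2) * hτ⟩
  rw [hc]
  field_simp
  linarith

lemma half_angle_identities {x ξ η : ℝ} (hx : |x| < 1) (hξ : ξ = x / (√(1 + x) + √(1 - x)))
    (hη : η = x / ((1 + √(1 + x)) * (1 + √(1 - x)))) :
    (1 - ξ * η) ^ 2 + ξ ^ 2 = 1 ∧ 2 * (1 - ξ * η) * ξ = x ∧
      (1 - ξ * η) ^ 2 - ξ ^ 2 = √(1 - x ^ 2) := by
  obtain ⟨hx1, hx2⟩ := abs_lt.mp hx
  set p := √(1 + x)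
  set q := √(1 - x)
  have hp0 : 0 < p := Real.sqrt_pos.mpr (by linarith)
  have hq0 : 0 < q := Real.sqrt_pos.mpr (by linarith)
  have hp : p ^ 2 = 1 + x := Real.sq_sqrt (by linarith)
  have hq : q ^ 2 = 1 - x := Real.sq_sqrt (by linarith)
  have hξη : 1 - ξ * η = (p + q) / 2 := by
    suffices x / (p + q) * (x / ((1 + p) * (1 + q))) = (2 - p - q) / 2 by
      rw [hξ, hη]; linarith
    rw [div_mul_div_comm, div_eq_div_iff (by positivity) (by norm_num)]
    linear_combination (-1 + q + 2 * q ^ 2 + p + p * q) * hp + (1 + 2 * x + q + p + p * q) * hq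
  have hξ' : ξ = (p - q) / 2 := by
    rw [hξ, div_eq_div_iff (by positivity) (by norm_num)]
    linear_combination -hp + hq
  have ht : √(1 - x ^ 2) = p * q := by
    rw [show (1 : ℝ) - x ^ 2 = (1 + x) * (1 - x) by ring, Real.sqrt_mul (by linarith)]
  rw [hξη, hξ', ht]
  refine ⟨?_, ?_, by ring⟩
  · linear_combination (hp + hq) / 2
  · linear_combination (hp - hq) / 2

theorem stmt_3 (a11 a12 a22 x : ℝ) (hx : |x| < 1)
    (A B : Matrix (Fin 2) (Fin 2) ℝ)
    (hA : A = !![a11, a12; a12, a22])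
    (hB : B = !![1, x; x, 1])
    (t : ℝ) (ht : t = Real.sqrt (1 - x ^ 2))
    (d : ℝ) (hd : d = 2 * a12 - (a11 + a22) * x) (hd0 : d ≠ 0)
    (c2 : ℝ) (hc2 : c2 = t * (a22 - a11) / d)
    (σ : ℝ) (hσ : σ = if 0 ≤ c2 then 1 else -1)
    (tϑ : ℝ) (htϑ : tϑ = σ / (|c2| + Real.sqrt (1 + c2 ^ 2)))
    (cϑ : ℝ) (hcϑ : cϑ = 1 / Real.sqrt (1 + tϑ ^ 2))
    (sϑ : ℝ) (hsϑ : sϑ = tϑ * cϑ)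
    (ξ : ℝ) (hξ : ξ = x / (Real.sqrt (1 + x) + Real.sqrt (1 - x)))
    (η : ℝ) (hη : η = x / ((1 + Real.sqrt (1 + x)) * (1 + Real.sqrt (1 - x))))
    (cφ cψ sφ sψ : ℝ)
    (hcφ : cφ = cϑ + ξ * (sϑ - η * cϑ))
    (hcψ : cψ = cϑ - ξ * (sϑ + η * cϑ))
    (hsφ : sφ = sϑ - ξ * (cϑ + η * sϑ))
    (hsψ : sψ = sϑ + ξ * (cϑ - η * sϑ))
    (Z : Matrix (Fin 2) (Fin 2) ℝ)
    (hZ : Z = (1 / t) • !![cφ, sφ; -sψ, cψ]) :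
    Zᵀ * B * Z = 1 ∧ (Zᵀ * A * Z).IsDiag := by
  obtain ⟨hW1, hWx, hWt⟩ := half_angle_identities hx hξ hη
  rw [← ht] at hWt
  have ht2 : t ^ 2 = 1 - x ^ 2 := by
    rw [ht]; exact Real.sq_sqrt (by nlinarith [abs_lt.mp hx])
  have ht0 : t ≠ 0 := by rintro rfl; nlinarith [abs_lt.mp hx]
  obtain ⟨hcs, hcot⟩ := cos_sin_of_tan_root (sq_add_two_mul_mul_eq_one hσ htϑ) hcϑ hsϑ
  have hc2d : c2 * d = t * (a22 - a11) := by
    rw [hc2]; field_simp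
  set W : Matrix (Fin 2) (Fin 2) ℝ := !![1 - ξ * η, -ξ; -ξ, 1 - ξ * η]
  set R : Matrix (Fin 2) (Fin 2) ℝ := !![cϑ, sϑ; -sϑ, cϑ]
  have hconj : ∀ C, Zᵀ * C * Z = (1 / t) ^ 2 • (Rᵀ * (Wᵀ * C * W) * R) := by
    intro C
    rw [hZ, hcφ, hcψ, hsφ, hsψ, perturbed_rotation_eq_mul]
    simp only [transpose_smul, transpose_mul, Matrix.smul_mul, Matrix.mul_smul, smul_smul,
      Matrix.mul_assoc, sq]
    rfl
  constructor
  · rw [hconj, hB, transpose_mul_unitDiag_mul_eq_smul_one hW1 hWx, Matrix.mul_smul,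
      Matrix.smul_mul, Matrix.mul_one, transpose_rotation_mul_rotation hcs, smul_smul, ← ht2,
      ← mul_pow, one_div_mul_cancel ht0, one_pow, one_smul]
  · rw [hconj]
    refine .smul _ (isDiag_rotation_conj (IsSymm.transpose_mul_mul ?_ W) ?_)
    · rw [hA]; ext i j; fin_cases i <;> fin_cases j <;> rfl
    rw [hA, transpose_mul_mul_apply_zero_one, transpose_mul_mul_apply_sub, hW1, hWt]
    linear_combination (a12 - (1 - ξ * η) * ξ * (a11 + a22)) * hcot + cϑ * sϑ * hc2d
      - c2 * cϑ * sϑ * hd - c2 * cϑ * sϑ * (a11 + a22) * hWx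
end

section
/- Let F be an m_F × n complex matrix, G an m_G × n complex matrix, and Z_N an invertible n × n complex matrix. Set F_N := F·Z_N and G_N := G·Z_N, and assume F_Nᴴ F_N and G_Nᴴ G_N are diagonal matrices and that every column of F_N and every column of G_N is nonzero. For each j let σ̃_F(j) and σ̃_G(j) be the Euclidean norms of the j-th columns of F_N and G_N respectively, and let θ(j) := 1/√(σ̃_F(j)² + σ̃_G(j)²). Define U := F_N·diag(σ̃_F)⁻¹, V := G_N·diag(σ̃_G)⁻¹, Z := Z_N·diag(θ), Σ_F := diag(j ↦ σ̃_F(j)·θ(j)), and Σ_G := diag(j ↦ σ̃_G(j)·θ(j)). Then Uᴴ U = Iₙ, Vᴴ V = Iₙ, F·Z = U·Σ_F, G·Z = V·Σ_G, and Σ_F² + Σ_G² = Iₙ. -/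
/-!
The Gram matrix `Aᴴ A` of a matrix with mutually orthogonal columns is `diagonal (‖aⱼ‖²)`, so
dividing each column by its (nonzero) norm gives orthonormal columns. Since `Z = Z_N diag(θ)`,
`F Z = F_N diag(θ) = (F_N diag(σ̃_F)⁻¹) diag(σ̃_F θ)`, and likewise for `G`. Finally
`(σ̃_F θ)² + (σ̃_G θ)² = 1` because `θ` is exactly `1 / √(σ̃_F² + σ̃_G²)`.
-/

open Matrix

namespace Matrix

variable {𝕜 m n : Type*} [RCLike 𝕜] [Fintype m]

noncomputable def colNorm (A : Matrix m n 𝕜) (j : n) : ℝ :=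
  √(∑ i, ‖A i j‖ ^ 2)

theorem colNorm_sq (A : Matrix m n 𝕜) (j : n) : colNorm A j ^ 2 = ∑ i, ‖A i j‖ ^ 2 :=
  Real.sq_sqrt (Finset.sum_nonneg fun _ _ => sq_nonneg _)

theorem colNorm_pos {A : Matrix m n 𝕜} {j : n} (h : ∃ i, A i j ≠ 0) : 0 < colNorm A j := by
  obtain ⟨i, hi⟩ := h
  exact Real.sqrt_pos.2 <| Finset.sum_pos' (fun _ _ => sq_nonneg _)
    ⟨i, Finset.mem_univ i, pow_pos (norm_pos_iff.2 hi) 2⟩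

theorem conjTranspose_mul_self_apply_self (A : Matrix m n 𝕜) (j : n) :
    (Aᴴ * A) j j = (colNorm A j : 𝕜) ^ 2 := by
  simp only [mul_apply, conjTranspose_apply, RCLike.star_def, RCLike.conj_mul]
  rw [← RCLike.ofReal_pow, colNorm_sq]
  push_cast
  rfl

variable [DecidableEq n]

theorem conjTranspose_mul_self_eq_diagonal {A : Matrix m n 𝕜} (h : (Aᴴ * A).IsDiag) :
    Aᴴ * A = diagonal fun j => (colNorm A j : 𝕜) ^ 2 := by
  ext j k
  rcases eq_or_ne j k with rfl | hjk
  · rw [diagonal_apply_eq, conjTranspose_mul_self_apply_self]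
  · rw [diagonal_apply_ne _ hjk, h hjk]

variable [Fintype n]

theorem inv_diagonal_of_ne_zero {v : n → 𝕜} (hv : ∀ j, v j ≠ 0) :
    (diagonal v)⁻¹ = diagonal fun j => (v j)⁻¹ :=
  inv_eq_right_inv <| by
    rw [diagonal_mul_diagonal, ← diagonal_one]
    exact congrArg diagonal (funext fun j => mul_inv_cancel₀ (hv j))

theorem mul_inv_diagonal_mul_diagonal {l : Type*} (A : Matrix l n 𝕜) {d : n → 𝕜}
    (hd : ∀ j, d j ≠ 0) (e : n → 𝕜) :
    A * (diagonal d)⁻¹ * diagonal (fun j => d j * e j) = A * diagonal e := by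
  rw [inv_diagonal_of_ne_zero hd, Matrix.mul_assoc, diagonal_mul_diagonal]
  exact congrArg (A * diagonal ·) (funext fun j => inv_mul_cancel_left₀ (hd j) (e j))

theorem conjTranspose_mul_self_eq_one_of_isDiag {A : Matrix m n 𝕜}
    (hdiag : (Aᴴ * A).IsDiag) (hcol : ∀ j, ∃ i, A i j ≠ 0) :
    (A * (diagonal fun j => (colNorm A j : 𝕜))⁻¹)ᴴ *
      (A * (diagonal fun j => (colNorm A j : 𝕜))⁻¹) = 1 := by
  have hne (j : n) : (colNorm A j : 𝕜) ≠ 0 := RCLike.ofReal_ne_zero.2 (colNorm_pos (hcol j)).ne'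
  rw [inv_diagonal_of_ne_zero hne, conjTranspose_mul, diagonal_conjTranspose, Matrix.mul_assoc,
    ← Matrix.mul_assoc Aᴴ, conjTranspose_mul_self_eq_diagonal hdiag, diagonal_mul_diagonal,
    diagonal_mul_diagonal, ← diagonal_one]
  refine congrArg diagonal (funext fun j => ?_)
  simp only [Pi.star_apply, star_inv₀, RCLike.star_def, RCLike.conj_ofReal]
  field_simp [hne j]

end Matrix

theorem mul_inv_sqrt_sq_add_mul_inv_sqrt_sq {a b : ℝ} (h : a ^ 2 + b ^ 2 ≠ 0) :
    (a * (1 / √(a ^ 2 + b ^ 2))) ^ 2 + (b * (1 / √(a ^ 2 + b ^ 2))) ^ 2 = 1 := by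
  have hs : √(a ^ 2 + b ^ 2) ^ 2 = a ^ 2 + b ^ 2 := Real.sq_sqrt (by positivity)
  rw [mul_pow, mul_pow, ← add_mul, div_pow, hs]
  field_simp

theorem stmt_7_general (mF mG n : ℕ)
    (F : Matrix (Fin mF) (Fin n) ℂ) (G : Matrix (Fin mG) (Fin n) ℂ)
    (ZN : Matrix (Fin n) (Fin n) ℂ)
    (FN : Matrix (Fin mF) (Fin n) ℂ) (hFN : FN = F * ZN)
    (GN : Matrix (Fin mG) (Fin n) ℂ) (hGN : GN = G * ZN)
    (hFdiag : (FNᴴ * FN).IsDiag) (hGdiag : (GNᴴ * GN).IsDiag)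
    (hFcol : ∀ j, ∃ i, FN i j ≠ 0) (hGcol : ∀ j, ∃ i, GN i j ≠ 0)
    (σF σG θ : Fin n → ℝ)
    (hσF : ∀ j, σF j = Real.sqrt (∑ i, ‖FN i j‖ ^ 2))
    (hσG : ∀ j, σG j = Real.sqrt (∑ i, ‖GN i j‖ ^ 2))
    (hθ : ∀ j, θ j = 1 / Real.sqrt (σF j ^ 2 + σG j ^ 2))
    (U : Matrix (Fin mF) (Fin n) ℂ)
    (hU : U = FN * (Matrix.diagonal (fun j => (σF j : ℂ)))⁻¹)
    (V : Matrix (Fin mG) (Fin n) ℂ)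
    (hV : V = GN * (Matrix.diagonal (fun j => (σG j : ℂ)))⁻¹)
    (Z : Matrix (Fin n) (Fin n) ℂ)
    (hZ : Z = ZN * Matrix.diagonal (fun j => (θ j : ℂ)))
    (SigmaF SigmaG : Matrix (Fin n) (Fin n) ℂ)
    (hSigmaF : SigmaF = Matrix.diagonal (fun j => ((σF j * θ j : ℝ) : ℂ)))
    (hSigmaG : SigmaG = Matrix.diagonal (fun j => ((σG j * θ j : ℝ) : ℂ))) :
    Uᴴ * U = 1 ∧ Vᴴ * V = 1 ∧ F * Z = U * SigmaF ∧ G * Z = V * SigmaG ∧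
      SigmaF ^ 2 + SigmaG ^ 2 = 1 := by
  obtain rfl : σF = colNorm FN := funext hσF
  obtain rfl : σG = colNorm GN := funext hσG
  have hFne (j : Fin n) : (colNorm FN j : ℂ) ≠ 0 :=
    Complex.ofReal_ne_zero.2 (colNorm_pos (hFcol j)).ne'
  have hGne (j : Fin n) : (colNorm GN j : ℂ) ≠ 0 :=
    Complex.ofReal_ne_zero.2 (colNorm_pos (hGcol j)).ne'
  subst hU hV hZ hSigmaF hSigmaG
  simp only [Complex.ofReal_mul]
  refine ⟨conjTranspose_mul_self_eq_one_of_isDiag hFdiag hFcol,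
    conjTranspose_mul_self_eq_one_of_isDiag hGdiag hGcol, ?_, ?_, ?_⟩
  · rw [mul_inv_diagonal_mul_diagonal _ hFne, ← Matrix.mul_assoc, hFN]
  · rw [mul_inv_diagonal_mul_diagonal _ hGne, ← Matrix.mul_assoc, hGN]
  · rw [diagonal_pow, diagonal_pow, diagonal_add, ← diagonal_one]
    refine congrArg diagonal (funext fun j => ?_)
    have hsum : colNorm FN j ^ 2 + colNorm GN j ^ 2 ≠ 0 := by
      have := colNorm_pos (hFcol j); positivity
    simp only [Pi.pow_apply]
    rw [hθ j]
    exact_mod_cast mul_inv_sqrt_sq_add_mul_inv_sqrt_sq hsum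

theorem stmt_7 (mF mG n : ℕ)
    (F : Matrix (Fin mF) (Fin n) ℂ) (G : Matrix (Fin mG) (Fin n) ℂ)
    (ZN : Matrix (Fin n) (Fin n) ℂ) (hZN : IsUnit ZN)
    (FN : Matrix (Fin mF) (Fin n) ℂ) (hFN : FN = F * ZN)
    (GN : Matrix (Fin mG) (Fin n) ℂ) (hGN : GN = G * ZN)
    (hFdiag : (FNᴴ * FN).IsDiag) (hGdiag : (GNᴴ * GN).IsDiag)
    (hFcol : ∀ j, ∃ i, FN i j ≠ 0) (hGcol : ∀ j, ∃ i, GN i j ≠ 0)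
    (σF σG θ : Fin n → ℝ)
    (hσF : ∀ j, σF j = Real.sqrt (∑ i, ‖FN i j‖ ^ 2))
    (hσG : ∀ j, σG j = Real.sqrt (∑ i, ‖GN i j‖ ^ 2))
    (hθ : ∀ j, θ j = 1 / Real.sqrt (σF j ^ 2 + σG j ^ 2))
    (U : Matrix (Fin mF) (Fin n) ℂ)
    (hU : U = FN * (Matrix.diagonal (fun j => (σF j : ℂ)))⁻¹)
    (V : Matrix (Fin mG) (Fin n) ℂ)
    (hV : V = GN * (Matrix.diagonal (fun j => (σG j : ℂ)))⁻¹)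
    (Z : Matrix (Fin n) (Fin n) ℂ)
    (hZ : Z = ZN * Matrix.diagonal (fun j => (θ j : ℂ)))
    (SigmaF SigmaG : Matrix (Fin n) (Fin n) ℂ)
    (hSigmaF : SigmaF = Matrix.diagonal (fun j => ((σF j * θ j : ℝ) : ℂ)))
    (hSigmaG : SigmaG = Matrix.diagonal (fun j => ((σG j * θ j : ℝ) : ℂ))) :
    Uᴴ * U = 1 ∧ Vᴴ * V = 1 ∧ F * Z = U * SigmaF ∧ G * Z = V * SigmaG ∧
      SigmaF ^ 2 + SigmaG ^ 2 = 1 :=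
  stmt_7_general mF mG n F G ZN FN hFN GN hGN hFdiag hGdiag hFcol hGcol σF σG θ hσF hσG hθ U hU V hV
    Z hZ SigmaF SigmaG hSigmaF hSigmaG
end

section
/- Let B be an n × n complex matrix with B(k, k) = 1 for every k, let i ≠ j be indices, and let Ẑ ∈ M₂(ℂ) satisfy Ẑᴴ · [[B(i,i), B(i,j)], [B(j,i), B(j,j)]] · Ẑ = I₂. Define the n × n matrix Z̃ by Z̃(i,i) := Ẑ(1,1), Z̃(i,j) := Ẑ(1,2), Z̃(j,i) := Ẑ(2,1), Z̃(j,j) := Ẑ(2,2), Z̃(k,k) := 1 for k ∉ {i, j}, and Z̃(k,l) := 0 for all other (k,l). Then every diagonal entry of Z̃ᴴ · B · Z̃ equals 1. -/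
open Matrix

theorem stmt_12 (n : ℕ) (B : Matrix (Fin n) (Fin n) ℂ)
    (hBdiag : ∀ k, B k k = 1)
    (i j : Fin n) (hij : i ≠ j)
    (Zhat : Matrix (Fin 2) (Fin 2) ℂ)
    (hZhat : Zhatᴴ * !![B i i, B i j; B j i, B j j] * Zhat = 1)
    (Ztilde : Matrix (Fin n) (Fin n) ℂ)
    (hii : Ztilde i i = Zhat 0 0) (hijZ : Ztilde i j = Zhat 0 1)
    (hji : Ztilde j i = Zhat 1 0) (hjj : Ztilde j j = Zhat 1 1)
    (hdiag : ∀ k, k ≠ i → k ≠ j → Ztilde k k = 1)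
    (hzero : ∀ k l, k ≠ l → ¬((k = i ∨ k = j) ∧ (l = i ∨ l = j)) → Ztilde k l = 0) :
    ∀ k, (Ztildeᴴ * B * Ztilde) k k = 1 := by
  have reduce : ∀ (f : Fin n → ℂ), (∀ b, b ≠ i → b ≠ j → f b = 0) →
      ∑ b, f b = f i + f j := by
    intro f hf
    rw [← Finset.sum_subset (Finset.subset_univ ({i, j} : Finset (Fin n))),
      Finset.sum_pair hij]
    intro b _ hb
    simp only [Finset.mem_insert, Finset.mem_singleton] at hb
    push_neg at hb
    exact hf b hb.1 hb.2
  intro k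
  by_cases hk : k = i ∨ k = j
  · have hcoli : ∀ b : Fin n, b ≠ i → b ≠ j → Ztilde b i = 0 := fun b hb1 hb2 =>
      hzero b i hb1 (by rintro ⟨h1 | h1, _⟩; exacts [hb1 h1, hb2 h1])
    have hcolj : ∀ b : Fin n, b ≠ i → b ≠ j → Ztilde b j = 0 := fun b hb1 hb2 =>
      hzero b j hb2 (by rintro ⟨h1 | h1, _⟩; exacts [hb1 h1, hb2 h1])
    rcases hk with hk | hk
    · have h00 := congrFun (congrFun hZhat 0) 0
      simp [mul_apply, Fin.sum_univ_two] at h00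
      rw [hk, mul_apply,
        reduce (fun b => (Ztildeᴴ * B) i b * Ztilde b i)
          (fun b hb1 hb2 => by simp [hcoli b hb1 hb2]),
        mul_apply, mul_apply,
        reduce (fun a => Ztildeᴴ i a * B a i)
          (fun a h1 h2 => by simp [conjTranspose_apply, hcoli a h1 h2]),
        reduce (fun a => Ztildeᴴ i a * B a j)
          (fun a h1 h2 => by simp [conjTranspose_apply, hcoli a h1 h2])]
      simp only [conjTranspose_apply, hii, hijZ, hji, hjj]
      simp only [← starRingEnd_apply]
      linear_combination h00
    · have h11 := congrFun (congrFun hZhat 1) 1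
      simp [mul_apply, Fin.sum_univ_two] at h11
      rw [hk, mul_apply,
        reduce (fun b => (Ztildeᴴ * B) j b * Ztilde b j)
          (fun b hb1 hb2 => by simp [hcolj b hb1 hb2]),
        mul_apply, mul_apply,
        reduce (fun a => Ztildeᴴ j a * B a i)
          (fun a h1 h2 => by simp [conjTranspose_apply, hcolj a h1 h2]),
        reduce (fun a => Ztildeᴴ j a * B a j)
          (fun a h1 h2 => by simp [conjTranspose_apply, hcolj a h1 h2])]
      simp only [conjTranspose_apply, hii, hijZ, hji, hjj]
      simp only [← starRingEnd_apply]
      linear_combination h11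
  · push_neg at hk
    obtain ⟨hki, hkj⟩ := hk
    have hcol : ∀ b : Fin n, b ≠ k → Ztilde b k = 0 := fun b hb =>
      hzero b k hb (by rintro ⟨_, rfl | rfl⟩; exacts [hki rfl, hkj rfl])
    rw [mul_apply, Finset.sum_eq_single k]
    · rw [mul_apply, Finset.sum_eq_single k]
      · simp [conjTranspose_apply, hdiag k hki hkj, hBdiag]
      · intro a _ ha
        simp [conjTranspose_apply, hcol a ha]
      · simp
    · intro b _ hb
      rw [hcol b hb, mul_zero]
    · simp
end
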